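/- arXiv:1404.4134 — 3 statements merged into one kernel-verified Lean document; each statement's English description precedes it below -/
import Mathlib

section
/- For any unitary matrix U of size 2n with eigenvalues e^{iθ_j}, θ_j ∈ (−π, π], whose top-left n×n block is K, the maximum of |θ_j| over all j is at least arccos(λ_min(K + K†)/2), where λ_min denotes the smallest eigenvalue of a Hermitian matrix. -/
/-! The quadratic form of `U = V diag(e^{iθ_j}) Vᴴ` at a unit vector `y` has real part
`∑ cos θ_j |(Vᴴ y)_j|²`, a convex combination of the `cos θ_j`, hence at least `cos (max |θ_j|)`.
Restricting to vectors supported on the first block, the same bound holds for the quadratic form of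
`K`, so every eigenvalue of `K + Kᴴ` (twice the real part of that form at an eigenvector) is at
least `2 cos (max |θ_j|)`; `arccos` is antitone. Phases with `max |θ_j| ≥ π` need no argument,
since `arccos ≤ π`. -/

open Matrix Complex Real

/-- The smallest eigenvalue of a Hermitian matrix. -/
noncomputable def lammin {n : ℕ} (A : Matrix (Fin n) (Fin n) ℂ) (hA : A.IsHermitian) : ℝ :=
  ⨅ i, hA.eigenvalues i

section QuadraticForm

variable {ι : Type*} [Fintype ι]

lemma cos_le_sum_cos_mul_of_sum_eq_one {θ w : ι → ℝ} {m : ℝ} (hm : m ≤ π)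
    (hθ : ∀ j, |θ j| ≤ m) (hw : ∀ j, 0 ≤ w j) (hw1 : ∑ j, w j = 1) :
    Real.cos m ≤ ∑ j, Real.cos (θ j) * w j :=
  calc Real.cos m = ∑ j, Real.cos m * w j := by rw [← Finset.mul_sum, hw1, mul_one]
    _ ≤ ∑ j, Real.cos (θ j) * w j := Finset.sum_le_sum fun j _ => by
      refine mul_le_mul_of_nonneg_right ?_ (hw j)
      rw [← cos_abs (θ j)]
      exact cos_le_cos_of_nonneg_of_le_pi (abs_nonneg _) hm (hθ j)

lemma re_star_dotProduct_self (c : ι → ℂ) : (star c ⬝ᵥ c).re = ∑ j, normSq (c j) := by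
  simp [dotProduct, normSq_apply]

lemma re_star_dotProduct_diagonal_exp_mulVec [DecidableEq ι] (θ : ι → ℝ) (c : ι → ℂ) :
    (star c ⬝ᵥ diagonal (fun j => exp (θ j * I)) *ᵥ c).re = ∑ j, Real.cos (θ j) * normSq (c j) := by
  simp only [mulVec_diagonal, dotProduct, re_sum, Pi.star_apply, star_def]
  refine Finset.sum_congr rfl fun j _ => ?_
  rw [mul_left_comm, mul_re, exp_ofReal_mul_I_re, exp_ofReal_mul_I_im, ← normSq_eq_conj_mul_self]
  simp

lemma star_dotProduct_mul_mul_conjTranspose_mulVec {R : Type*} [CommSemiring R] [StarRing R]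
    (V D : Matrix ι ι R) (y : ι → R) :
    star y ⬝ᵥ (V * D * Vᴴ) *ᵥ y = star (Vᴴ *ᵥ y) ⬝ᵥ D *ᵥ (Vᴴ *ᵥ y) := by
  rw [← mulVec_mulVec, ← mulVec_mulVec, dotProduct_mulVec, star_mulVec, conjTranspose_conjTranspose]

lemma star_dotProduct_self_conjTranspose_mulVec [DecidableEq ι] {V : Matrix ι ι ℂ}
    (hV : V ∈ unitaryGroup ι ℂ) (y : ι → ℂ) :
    star (Vᴴ *ᵥ y) ⬝ᵥ Vᴴ *ᵥ y = star y ⬝ᵥ y := by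
  have hVV : V * Vᴴ = 1 := mem_unitaryGroup_iff.mp hV
  rw [star_mulVec, ← dotProduct_mulVec, conjTranspose_conjTranspose, mulVec_mulVec, hVV,
    one_mulVec]

lemma cos_le_re_star_dotProduct_unitary_diagonal_exp_mulVec [DecidableEq ι] {V : Matrix ι ι ℂ}
    (hV : V ∈ unitaryGroup ι ℂ) {θ : ι → ℝ} {m : ℝ} (hm : m ≤ π) (hθ : ∀ j, |θ j| ≤ m)
    {y : ι → ℂ} (hy : star y ⬝ᵥ y = 1) :
    Real.cos m ≤ (star y ⬝ᵥ (V * diagonal (fun j => exp (θ j * I)) * Vᴴ) *ᵥ y).re := by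
  rw [star_dotProduct_mul_mul_conjTranspose_mulVec, re_star_dotProduct_diagonal_exp_mulVec]
  refine cos_le_sum_cos_mul_of_sum_eq_one hm hθ (fun j => normSq_nonneg _) ?_
  rw [← re_star_dotProduct_self, star_dotProduct_self_conjTranspose_mulVec hV, hy, one_re]

lemma re_star_dotProduct_add_conjTranspose_mulVec (K : Matrix ι ι ℂ) (x : ι → ℂ) :
    (star x ⬝ᵥ (K + Kᴴ) *ᵥ x).re = 2 * (star x ⬝ᵥ K *ᵥ x).re := by
  have hconj : star x ⬝ᵥ Kᴴ *ᵥ x = star (star x ⬝ᵥ K *ᵥ x) := by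
    rw [star_dotProduct, star_mulVec, conjTranspose_conjTranspose, dotProduct_mulVec]
  rw [add_mulVec, dotProduct_add, hconj, add_re, star_def, conj_re]
  ring

end QuadraticForm

section Blocks

variable {m n R : Type*} [Fintype m] [Fintype n] [NonUnitalSemiring R] [StarRing R]

lemma star_sumElim_zero_dotProduct_self (x : m → R) :
    star (Sum.elim x (0 : n → R)) ⬝ᵥ Sum.elim x 0 = star x ⬝ᵥ x := by
  simp [dotProduct, Fintype.sum_sum_type]

lemma star_sumElim_zero_dotProduct_mulVec (U : Matrix (m ⊕ n) (m ⊕ n) R) (x : m → R) :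
    star (Sum.elim x (0 : n → R)) ⬝ᵥ U *ᵥ Sum.elim x 0 = star x ⬝ᵥ U.toBlocks₁₁ *ᵥ x := by
  simp [dotProduct, mulVec, toBlocks₁₁, Fintype.sum_sum_type]

end Blocks

lemma le_eigenvalues_of_le_re_star_dotProduct_mulVec {ι : Type*} [Fintype ι] [DecidableEq ι]
    {A : Matrix ι ι ℂ} (hA : A.IsHermitian) {c : ℝ}
    (h : ∀ x : ι → ℂ, star x ⬝ᵥ x = 1 → c ≤ (star x ⬝ᵥ A *ᵥ x).re) (i : ι) :
    c ≤ hA.eigenvalues i := by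
  rw [hA.eigenvalues_eq]
  refine h _ ?_
  rw [dotProduct_comm, ← EuclideanSpace.inner_eq_star_dotProduct]
  exact inner_self_eq_one_of_norm_eq_one (hA.eigenvectorBasis.orthonormal.1 i)

lemma le_lammin {n : ℕ} (hn : 0 < n) {A : Matrix (Fin n) (Fin n) ℂ} (hA : A.IsHermitian) {c : ℝ}
    (h : ∀ x : Fin n → ℂ, star x ⬝ᵥ x = 1 → c ≤ (star x ⬝ᵥ A *ᵥ x).re) :
    c ≤ lammin A hA :=
  have : Nonempty (Fin n) := ⟨⟨0, hn⟩⟩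
  le_ciInf (le_eigenvalues_of_le_re_star_dotProduct_mulVec hA h)

theorem max_phase_ge_arccos_lammin_block_general (n : ℕ) (hn : 0 < n)
    (U V : Matrix (Fin n ⊕ Fin n) (Fin n ⊕ Fin n) ℂ)
    (hV : V ∈ Matrix.unitaryGroup (Fin n ⊕ Fin n) ℂ)
    (θ : Fin n ⊕ Fin n → ℝ)
    (hdiag : U = V * Matrix.diagonal (fun j => Complex.exp (θ j * Complex.I)) * Vᴴ) :
    Real.arccos (lammin (U.toBlocks₁₁ + (U.toBlocks₁₁)ᴴ)
        (Matrix.isHermitian_add_transpose_self _) / 2)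
      ≤ ⨆ j, |θ j| := by
  set M := ⨆ j, |θ j|
  rcases le_or_gt π M with hπM | hMπ
  · exact (arccos_le_pi _).trans hπM
  have hθM : ∀ j, |θ j| ≤ M := le_ciSup (Finite.bddAbove_range _)
  have hK : ∀ x, star x ⬝ᵥ x = 1 → Real.cos M ≤ (star x ⬝ᵥ U.toBlocks₁₁ *ᵥ x).re := fun x hx => by
    rw [← star_sumElim_zero_dotProduct_mulVec, hdiag]
    exact cos_le_re_star_dotProduct_unitary_diagonal_exp_mulVec hV hMπ.le hθM
      (by rwa [star_sumElim_zero_dotProduct_self])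
  have hmin : 2 * Real.cos M ≤ lammin _ (isHermitian_add_transpose_self U.toBlocks₁₁) :=
    le_lammin hn _ fun x hx => by
      rw [re_star_dotProduct_add_conjTranspose_mulVec]
      linarith [hK x hx]
  calc arccos (lammin _ (isHermitian_add_transpose_self U.toBlocks₁₁) / 2)
      ≤ arccos (Real.cos M) := arccos_le_arccos (by linarith)
    _ = M := arccos_cos (Real.iSup_nonneg fun j => abs_nonneg _) hMπ.le

/-- For any unitary matrix `U` of size `2n` (indexed by `Fin n ⊕ Fin n`) with eigenvalues
`e^{iθ_j}`, `θ_j ∈ (−π, π]`, whose top-left `n × n` block is `K = U.toBlocks₁₁`, the maximum of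
`|θ_j|` is at least `arccos(λ_min(K + Kᴴ)/2)`. -/
theorem max_phase_ge_arccos_lammin_block (n : ℕ) (hn : 0 < n)
    (U V : Matrix (Fin n ⊕ Fin n) (Fin n ⊕ Fin n) ℂ)
    (hU : U ∈ Matrix.unitaryGroup (Fin n ⊕ Fin n) ℂ)
    (hV : V ∈ Matrix.unitaryGroup (Fin n ⊕ Fin n) ℂ)
    (θ : Fin n ⊕ Fin n → ℝ) (hθ : ∀ j, θ j ∈ Set.Ioc (-Real.pi) Real.pi)
    (hdiag : U = V * Matrix.diagonal (fun j => Complex.exp (θ j * Complex.I)) * Vᴴ) :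
    Real.arccos (lammin (U.toBlocks₁₁ + (U.toBlocks₁₁)ᴴ)
        (Matrix.isHermitian_add_transpose_self _) / 2)
      ≤ ⨆ j, |θ j| :=
  max_phase_ge_arccos_lammin_block_general n hn U V hV θ hdiag
end

section
/- Given Kraus operators K_1, …, K_d ∈ C^{n×n} of a quantum channel (so ∑_j K_j†K_j = I), there exists a d×d unitary matrix W = [w_ij] such that the equivalent Kraus operators K̃_i = ∑_j w_ij K_j satisfy Tr(K̃_j) = 0 for all j = 2, …, d. -/
/-!
Since `Tr(∑ j, w_ij K_j) = (W t)_i` for the vector of traces `t_j = Tr K_j`, it suffices to find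
a unitary `W` mapping `t` onto a multiple of the first basis vector. Extend `t / ‖t‖` to an
orthonormal basis `b` of `ℂ^d` and take the rows of `W` to be the conjugates of the `b_i`, so that
`(W t)_i = ⟪b_i, t⟫`.
-/

open Matrix

theorem OrthonormalBasis.exists_inner_eq_zero_of_ne {𝕜 E ι : Type*} [RCLike 𝕜]
    [NormedAddCommGroup E] [InnerProductSpace 𝕜 E] [FiniteDimensional 𝕜 E] [Fintype ι]
    (card_ι : Module.finrank 𝕜 E = Fintype.card ι) (v : E) (i₀ : ι) :
    ∃ b : OrthonormalBasis ι 𝕜 E, ∀ i ≠ i₀, inner 𝕜 (b i) v = 0 := by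
  by_cases hv : v = 0
  · obtain ⟨b, -⟩ := Orthonormal.exists_orthonormalBasis_extension_of_card_eq card_ι
      (v := fun _ => v) (s := ∅) ⟨fun i => i.2.elim, fun i => i.2.elim⟩
    exact ⟨b, fun i _ => by simp [hv]⟩
  · have hu : Orthonormal 𝕜 (({i₀} : Set ι).domRestrict fun _ => (‖v‖⁻¹ : 𝕜) • v) := by
      refine ⟨fun _ => ?_, fun i j hij => (hij (Subsingleton.elim i j)).elim⟩
      simp [norm_smul, hv]
    obtain ⟨b, hb⟩ := hu.exists_orthonormalBasis_extension_of_card_eq card_ι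
    refine ⟨b, fun i hi => ?_⟩
    have h := b.inner_eq_zero hi
    rw [hb i₀ rfl, inner_smul_right] at h
    simpa [hv] using h

namespace Matrix

theorem exists_mem_unitaryGroup_mulVec_apply_eq_zero_of_ne {𝕜 ι : Type*} [RCLike 𝕜] [Fintype ι]
    [DecidableEq ι] (v : ι → 𝕜) (i₀ : ι) :
    ∃ W ∈ unitaryGroup ι 𝕜, ∀ i ≠ i₀, (W *ᵥ v) i = 0 := by
  obtain ⟨b, hb⟩ :=
    OrthonormalBasis.exists_inner_eq_zero_of_ne finrank_euclideanSpace (WithLp.toLp 2 v) i₀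
  let e := EuclideanSpace.basisFun ι 𝕜
  refine ⟨(e.toBasis.toMatrix b)ᴴ,
    Unitary.star_mem (e.toMatrix_orthonormalBasis_mem_unitary b), fun i hi => ?_⟩
  have hrow : ((e.toBasis.toMatrix b)ᴴ *ᵥ v) i = inner 𝕜 (b i) (WithLp.toLp 2 v) := by
    simp [e, mulVec, dotProduct, EuclideanSpace.inner_eq_star_dotProduct,
      Module.Basis.toMatrix_apply, mul_comm]
  rw [hrow, hb i hi]

theorem trace_sum_smul_eq_mulVec_trace {R ι κ n : Type*} [CommSemiring R] [Fintype κ]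
    [Fintype n] (A : Matrix ι κ R) (K : κ → Matrix n n R) (i : ι) :
    trace (∑ j, A i j • K j) = (A *ᵥ fun j => trace (K j)) i := by
  simp only [trace_sum, trace_smul, mulVec, dotProduct, smul_eq_mul]

end Matrix

theorem exists_unitary_traceless_kraus_general (n d : ℕ) (hd : 0 < d)
    (K : Fin d → Matrix (Fin n) (Fin n) ℂ) :
    ∃ W : Matrix (Fin d) (Fin d) ℂ, W ∈ Matrix.unitaryGroup (Fin d) ℂ ∧
      ∀ i : Fin d, i ≠ ⟨0, hd⟩ → Matrix.trace (∑ j, W i j • K j) = 0 := by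
  obtain ⟨W, hW, hWt⟩ :=
    exists_mem_unitaryGroup_mulVec_apply_eq_zero_of_ne (fun j => trace (K j)) ⟨0, hd⟩
  exact ⟨W, hW, fun i hi => (trace_sum_smul_eq_mulVec_trace W K i).trans (hWt i hi)⟩

/-- Given Kraus operators `K_1, …, K_d` of a quantum channel (`∑ j, K_jᴴ K_j = I`), there is a
`d × d` unitary matrix `W` such that the equivalent Kraus operators `K̃_i = ∑_j w_ij K_j`
satisfy `Tr(K̃_j) = 0` for all `j ≠ 1`. -/
theorem exists_unitary_traceless_kraus (n d : ℕ) (hd : 0 < d)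
    (K : Fin d → Matrix (Fin n) (Fin n) ℂ)
    (hK : ∑ j, (K j)ᴴ * K j = 1) :
    ∃ W : Matrix (Fin d) (Fin d) ℂ, W ∈ Matrix.unitaryGroup (Fin d) ℂ ∧
      ∀ i : Fin d, i ≠ ⟨0, hd⟩ → Matrix.trace (∑ j, W i j • K j) = 0 :=
  exists_unitary_traceless_kraus_general n d hd K
end

section
/- Let K_j = s_j P_j for j = 1, …, d, where each P_j is a rank-r orthogonal projection in C^{n×n}, s_j ∈ C, and ∑_j K_j†K_j = I_n. Then max over v ∈ C^d with ‖v‖ ≤ 1 of (1/2)λ_min(∑_j v_j K_j + (∑_j v_j K_j)†) equals √(r/n). -/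
/-!
The trace bounds the smallest eigenvalue: `n λ_min(A) ≤ tr A`. Since each `P_j` has trace `r`,
`tr (K_v + K_vᴴ) = 2 r Re ∑ v_j s_j`, and by Cauchy–Schwarz `Re ∑ v_j s_j ≤ (∑ |s_j|²)^½`. Taking
the trace of the completeness relation gives `r ∑ |s_j|² = n`, so `½ λ_min ≤ r (∑ |s_j|²)^½ / n
= √(r / n)`. Equality holds for `v_j = √(r / n) · conj s_j`, where the completeness relation turns
`K_v` into `√(r / n) · I`.
-/

open Matrix

theorem Matrix.trace_eq_rank_of_isIdempotentElem {K m : Type*} [Field K] [Fintype m]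
    [DecidableEq m] {A : Matrix m m K} (hA : IsIdempotentElem A) : A.trace = A.rank := by
  have h : IsIdempotentElem (toLin' A) := hA.map Matrix.toLinAlgEquiv'
  rw [Matrix.rank, ← Matrix.toLin'_apply', ← (LinearMap.IsIdempotentElem.isProj_range _ h).trace,
    LinearMap.trace_eq_matrix_trace K (Pi.basisFun K m), LinearMap.toMatrix_eq_toMatrix',
    LinearMap.toMatrix'_toLin']

theorem Matrix.conjTranspose_smul_mul_smul_of_isStarProjection {𝕜 m : Type*} [RCLike 𝕜]
    [Fintype m] {P : Matrix m m 𝕜} (hP : IsStarProjection P) (z : 𝕜) :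
    (z • P)ᴴ * (z • P) = (‖z‖ ^ 2 : ℝ) • P := by
  rw [conjTranspose_smul, ← star_eq_conjTranspose, hP.isSelfAdjoint.star_eq, smul_mul_smul_comm,
    hP.isIdempotentElem.eq, RCLike.star_def, RCLike.conj_mul, ← RCLike.ofReal_pow,
    RCLike.real_smul_eq_coe_smul (K := 𝕜)]

theorem Complex.re_sum_mul_le_sqrt_mul_sqrt {ι : Type*} (s : Finset ι) (v w : ι → ℂ) :
    (∑ i ∈ s, v i * w i).re ≤ √(∑ i ∈ s, ‖v i‖ ^ 2) * √(∑ i ∈ s, ‖w i‖ ^ 2) :=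
  calc (∑ i ∈ s, v i * w i).re ≤ ∑ i ∈ s, ‖v i‖ * ‖w i‖ := by
        rw [Complex.re_sum]
        exact Finset.sum_le_sum fun i _ => (Complex.re_le_norm _).trans (norm_mul _ _).le
    _ ≤ _ := Real.sum_mul_le_sqrt_mul_sqrt s _ _

section lammin

variable {n : ℕ} {A : Matrix (Fin n) (Fin n) ℂ}

theorem lammin_le_eigenvalues (hA : A.IsHermitian) (i : Fin n) :
    lammin A hA ≤ hA.eigenvalues i :=
  ciInf_le (Set.finite_range _).bddBelow i

theorem card_mul_lammin_le_re_trace (hA : A.IsHermitian) : n * lammin A hA ≤ A.trace.re := by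
  simpa [hA.trace_eq_sum_eigenvalues] using
    Finset.card_nsmul_le_sum Finset.univ _ _ fun i _ => lammin_le_eigenvalues hA i

theorem lammin_eq_of_eq_smul_one (hn : 0 < n) (hA : A.IsHermitian) {c : ℝ} (h : A = c • 1) :
    lammin A hA = c := by
  have : Nonempty (Fin n) := ⟨⟨0, hn⟩⟩
  have heig (i : Fin n) : hA.eigenvalues i = c := by
    simpa [h, ← Algebra.algebraMap_eq_smul_one, spectrum.scalar_eq] using
      hA.eigenvalues_mem_spectrum_real i
  simp [lammin, heig]

end lammin

section ProjectorChannel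

variable {n d r : ℕ} {P : Fin d → Matrix (Fin n) (Fin n) ℂ} {s : Fin d → ℂ}

theorem sum_norm_sq_mul_eq_of_sum_smul_eq_one (htr : ∀ j, (P j).trace = r)
    (hcomplete : ∑ j, (‖s j‖ ^ 2 : ℝ) • P j = 1) : (∑ j, ‖s j‖ ^ 2) * r = n := by
  have := congrArg trace hcomplete
  simp only [trace_sum, trace_smul, htr, trace_one, Fintype.card_fin, Complex.real_smul,
    ← Finset.sum_mul] at this
  exact_mod_cast this

theorem trace_sum_smul_smul (htr : ∀ j, (P j).trace = r) (v : Fin d → ℂ) :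
    (∑ j, v j • s j • P j).trace = (∑ j, v j * s j) * r := by
  simp [trace_sum, trace_smul, htr, Finset.sum_mul, mul_assoc]

theorem half_lammin_le_sqrt (hn : 0 < n) (htr : ∀ j, (P j).trace = r)
    (hS : (∑ j, ‖s j‖ ^ 2) * r = n) {v : Fin d → ℂ} (hv : ∑ j, ‖v j‖ ^ 2 ≤ 1)
    (hA : ((∑ j, v j • s j • P j) + (∑ j, v j • s j • P j)ᴴ).IsHermitian) :
    1 / 2 * lammin _ hA ≤ √(r / n) := by
  have hnR : (0 : ℝ) < n := by exact_mod_cast hn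
  have htrace : ((∑ j, v j • s j • P j) + (∑ j, v j • s j • P j)ᴴ).trace.re =
      2 * r * (∑ j, v j * s j).re := by
    rw [trace_add, trace_conjTranspose, trace_sum_smul_smul htr]
    simp only [Complex.add_re, Complex.star_def, Complex.conj_re, Complex.mul_re,
      Complex.natCast_re, Complex.natCast_im]
    ring
  have hT : (∑ j, v j * s j).re ≤ √(∑ j, ‖s j‖ ^ 2) :=
    (Complex.re_sum_mul_le_sqrt_mul_sqrt _ v s).trans
      (mul_le_of_le_one_left (Real.sqrt_nonneg _) (Real.sqrt_le_one.mpr hv))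
  have hsqrt : r * √(∑ j, ‖s j‖ ^ 2) / n = √(r / n) :=
    calc (r : ℝ) * √(∑ j, ‖s j‖ ^ 2) / n = √((r / n) ^ 2 * ∑ j, ‖s j‖ ^ 2) := by
          rw [Real.sqrt_mul (by positivity), Real.sqrt_sq (by positivity)]
          ring
      _ = √(r / n) := by
          congr 1
          field_simp
          linear_combination (r : ℝ) * hS
  have hlam := card_mul_lammin_le_re_trace hA
  rw [htrace] at hlam
  rw [← hsqrt, le_div_iff₀ hnR]
  nlinarith [mul_le_mul_of_nonneg_left hT (Nat.cast_nonneg (α := ℝ) r)]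

theorem sum_norm_sq_sqrt_mul_star_eq_one (hn : 0 < n) (hS : (∑ j, ‖s j‖ ^ 2) * r = n) :
    ∑ j, ‖(√((r : ℝ) / n) : ℂ) * star (s j)‖ ^ 2 = 1 := by
  have hnR : (0 : ℝ) < n := by exact_mod_cast hn
  simp only [norm_mul, mul_pow, ← Finset.mul_sum, norm_star, Complex.norm_real, Real.norm_eq_abs,
    sq_abs, Real.sq_sqrt (by positivity : (0 : ℝ) ≤ r / n)]
  rw [div_mul_eq_mul_div, mul_comm, hS, div_self hnR.ne']

theorem half_lammin_smul_star_eq (hn : 0 < n) (hcomplete : ∑ j, (‖s j‖ ^ 2 : ℝ) • P j = 1)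
    (c : ℝ) (hA : ((∑ j, ((c : ℂ) * star (s j)) • s j • P j) +
      (∑ j, ((c : ℂ) * star (s j)) • s j • P j)ᴴ).IsHermitian) :
    1 / 2 * lammin _ hA = c := by
  have hsum : ∑ j, ((c : ℂ) * star (s j)) • s j • P j = (c : ℂ) • 1 := by
    rw [← hcomplete, Finset.smul_sum]
    refine Finset.sum_congr rfl fun j _ => ?_
    rw [smul_smul, mul_assoc, Complex.star_def, Complex.conj_mul', ← Complex.ofReal_pow,
      ← Complex.coe_smul (‖s j‖ ^ 2), smul_smul]
  rw [lammin_eq_of_eq_smul_one hn _ (c := 2 * c)]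
  · ring
  · rw [hsum, conjTranspose_smul, conjTranspose_one, Complex.star_def, Complex.conj_ofReal,
      ← add_smul, ← Complex.ofReal_add, Complex.coe_smul, two_mul]

end ProjectorChannel

theorem projector_channel_max_half_lammin_general (n d r : ℕ) (hn : 0 < n)
    (P : Fin d → Matrix (Fin n) (Fin n) ℂ)
    (hproj : ∀ j, P j * P j = P j ∧ (P j)ᴴ = P j)
    (hrank : ∀ j, (P j).rank = r)
    (s : Fin d → ℂ)
    (K : Fin d → Matrix (Fin n) (Fin n) ℂ)
    (hKdef : ∀ j, K j = s j • P j)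
    (hK : ∑ j, (K j)ᴴ * K j = 1) :
    IsGreatest {x : ℝ | ∃ v : Fin d → ℂ, (∑ j, ‖v j‖ ^ 2 ≤ 1) ∧
        x = (1 / 2) * lammin ((∑ j, v j • K j) + (∑ j, v j • K j)ᴴ)
          (Matrix.isHermitian_add_transpose_self _)}
      (Real.sqrt ((r : ℝ) / n)) := by
  obtain rfl : K = fun j => s j • P j := funext hKdef
  have hP (j : Fin d) : IsStarProjection (P j) := ⟨(hproj j).1, (hproj j).2⟩
  have htr (j : Fin d) : (P j).trace = r := by
    rw [trace_eq_rank_of_isIdempotentElem (hP j).isIdempotentElem, hrank j]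
  have hcomplete : ∑ j, (‖s j‖ ^ 2 : ℝ) • P j = 1 := by
    simpa only [conjTranspose_smul_mul_smul_of_isStarProjection (hP _)] using hK
  have hS := sum_norm_sq_mul_eq_of_sum_smul_eq_one htr hcomplete
  refine ⟨⟨fun j => √((r : ℝ) / n) * star (s j), (sum_norm_sq_sqrt_mul_star_eq_one hn hS).le,
    (half_lammin_smul_star_eq hn hcomplete _ _).symm⟩, ?_⟩
  rintro _ ⟨v, hv, rfl⟩
  exact half_lammin_le_sqrt hn htr hS hv _

/-- For a projector channel with Kraus operators `K_j = s_j P_j`, where each `P_j` is a rank-`r`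
orthogonal projection and `∑_j K_jᴴ K_j = I`, the maximum over `v ∈ ℂ^d` with `‖v‖ ≤ 1` of
`(1/2) λ_min(K_v + K_vᴴ)` equals `√(r/n)`. -/
theorem projector_channel_max_half_lammin (n d r : ℕ) (hn : 0 < n) (hr : 0 < r) (hd : 0 < d)
    (P : Fin d → Matrix (Fin n) (Fin n) ℂ)
    (hproj : ∀ j, P j * P j = P j ∧ (P j)ᴴ = P j)
    (hrank : ∀ j, (P j).rank = r)
    (s : Fin d → ℂ)
    (K : Fin d → Matrix (Fin n) (Fin n) ℂ)
    (hKdef : ∀ j, K j = s j • P j)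
    (hK : ∑ j, (K j)ᴴ * K j = 1) :
    IsGreatest {x : ℝ | ∃ v : Fin d → ℂ, (∑ j, ‖v j‖ ^ 2 ≤ 1) ∧
        x = (1 / 2) * lammin ((∑ j, v j • K j) + (∑ j, v j • K j)ᴴ)
          (Matrix.isHermitian_add_transpose_self _)}
      (Real.sqrt ((r : ℝ) / n)) :=
  projector_channel_max_half_lammin_general n d r hn P hproj hrank s K hKdef hK
end
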